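/- arXiv:2111.01265 — 10 statements merged into one kernel-verified Lean document; each statement's English description precedes it below -/
import Mathlib

section
/- Let H be an m×m real symmetric matrix and u,v two indices. Then u and v are cospectral with respect to H (i.e., (Eⱼ)ᵤᵤ = (Eⱼ)ᵥᵥ for all spectral projections Eⱼ of H) if and only if ⟨Hʲ(eᵤ - eᵥ), Hˡ(eᵤ + eᵥ)⟩ = 0 for all j,ℓ ≥ 0. -/
/-! Since `H ^ n = ∑ₖ λₖⁿ Eₖ` and `H ^ (j + l)` is symmetric, the inner product
`⟪Hʲ(eᵤ - eᵥ), Hˡ(eᵤ + eᵥ)⟫` equals `(H ^ (j + l))ᵤᵤ - (H ^ (j + l))ᵥᵥ`, i.e.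
`∑ₖ λₖ^(j+l) ((Eₖ)ᵤᵤ - (Eₖ)ᵥᵥ)`. These power sums vanish for all exponents iff every difference
`(Eₖ)ᵤᵤ - (Eₖ)ᵥᵥ` does, because the `λₖ` are distinct and the Vandermonde matrix is invertible. -/

open Matrix

theorem pow_eq_sum_pow_smul_of_orthogonal_idempotents {R A ι : Type*} [CommSemiring R]
    [Semiring A] [Algebra R A] [Fintype ι] {lam : ι → R} {E : ι → A}
    (hidem : ∀ j, E j * E j = E j) (horth : ∀ j k, j ≠ k → E j * E k = 0)
    (hsum : ∑ j, E j = 1) (n : ℕ) :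
    (∑ j, lam j • E j) ^ n = ∑ j, lam j ^ n • E j := by
  induction n with
  | zero => simp [hsum]
  | succ n ih =>
    rw [pow_succ, ih, Finset.sum_mul_sum]
    refine Finset.sum_congr rfl fun k _ => ?_
    rw [Finset.sum_eq_single k
      (fun j _ hj => by rw [smul_mul_smul_comm, horth k j (Ne.symm hj), smul_zero])
      (fun h => absurd (Finset.mem_univ k) h), smul_mul_smul_comm, hidem, pow_succ]

section

variable {R n : Type*} [CommRing R] [Fintype n] [DecidableEq n]

theorem Matrix.IsSymm.pow_mulVec_dotProduct_pow_mulVec {A : Matrix n n R} (hA : A.IsSymm)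
    (j l : ℕ) (x y : n → R) :
    (A ^ j *ᵥ x) ⬝ᵥ (A ^ l *ᵥ y) = x ⬝ᵥ (A ^ (j + l) *ᵥ y) := by
  rw [← vecMul_transpose, transpose_pow, hA.eq, ← dotProduct_mulVec, mulVec_mulVec, pow_add]

theorem Matrix.IsSymm.single_sub_dotProduct_mulVec_single_add {M : Matrix n n R} (hM : M.IsSymm)
    (u v : n) :
    (Pi.single u 1 - Pi.single v 1 : n → R) ⬝ᵥ (M *ᵥ (Pi.single u 1 + Pi.single v 1))
      = M u u - M v v := by
  have huv : M u v = M v u := hM.apply v u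
  simp only [mulVec_add, mulVec_single_one, sub_dotProduct, dotProduct_add,
    single_one_dotProduct, col_apply, huv]
  ring

end

theorem stmt2_general {m r : ℕ} (H : Matrix (Fin m) (Fin m) ℝ)
    (lam : Fin r → ℝ) (E : Fin r → Matrix (Fin m) (Fin m) ℝ)
    (hH : H.IsSymm)
    (hlam : Function.Injective lam)
    (hEidem : ∀ j, E j * E j = E j)
    (hEorth : ∀ j k, j ≠ k → E j * E k = 0)
    (hEsum : ∑ j, E j = 1)
    (hspec : H = ∑ j, lam j • E j)
    (u v : Fin m) :
    (∀ j, (E j) u u = (E j) v v)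
      ↔ ∀ j l : ℕ,
          dotProduct ((H ^ j) *ᵥ ((Pi.single u 1 : Fin m → ℝ) - Pi.single v 1))
            ((H ^ l) *ᵥ ((Pi.single u 1 : Fin m → ℝ) + Pi.single v 1)) = 0 := by
  have inner_eq_power_sum : ∀ j l : ℕ,
      dotProduct ((H ^ j) *ᵥ ((Pi.single u 1 : Fin m → ℝ) - Pi.single v 1))
        ((H ^ l) *ᵥ ((Pi.single u 1 : Fin m → ℝ) + Pi.single v 1))
      = ∑ k, ((E k) u u - (E k) v v) * lam k ^ (j + l) := by
    intro j l
    rw [hH.pow_mulVec_dotProduct_pow_mulVec,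
      (hH.pow (j + l)).single_sub_dotProduct_mulVec_single_add, hspec,
      pow_eq_sum_pow_smul_of_orthogonal_idempotents hEidem hEorth hEsum]
    simp only [Matrix.sum_apply, Matrix.smul_apply, smul_eq_mul, ← Finset.sum_sub_distrib]
    exact Finset.sum_congr rfl fun k _ => by ring
  refine ⟨fun h j l => by simp [inner_eq_power_sum, h], fun h k => ?_⟩
  have hdiff := eq_zero_of_forall_pow_sum_mul_pow_eq_zero hlam fun i => by
    rw [← h 0 i, inner_eq_power_sum, zero_add]
  exact sub_eq_zero.mp (congrFun hdiff k)

theorem stmt2 {m r : ℕ} (H : Matrix (Fin m) (Fin m) ℝ)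
    (lam : Fin r → ℝ) (E : Fin r → Matrix (Fin m) (Fin m) ℝ)
    (hH : H.IsSymm)
    (hlam : Function.Injective lam)
    (hEsymm : ∀ j, (E j).IsSymm)
    (hEidem : ∀ j, E j * E j = E j)
    (hEorth : ∀ j k, j ≠ k → E j * E k = 0)
    (hEsum : ∑ j, E j = 1)
    (hEnz : ∀ j, E j ≠ 0)
    (hspec : H = ∑ j, lam j • E j)
    (u v : Fin m) :
    (∀ j, (E j) u u = (E j) v v)
      ↔ ∀ j l : ℕ,
          dotProduct ((H ^ j) *ᵥ ((Pi.single u 1 : Fin m → ℝ) - Pi.single v 1))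
            ((H ^ l) *ᵥ ((Pi.single u 1 : Fin m → ℝ) + Pi.single v 1)) = 0 :=
  stmt2_general H lam E hH hlam hEidem hEorth hEsum hspec u v
end

section
/- Let H be an m×m real symmetric matrix. Indices u and v are cospectral with respect to H if and only if there exists a real symmetric matrix R with R² = I, R eᵤ = eᵥ, and RH = HR. -/
/-!
Write `s = e_u - e_v` and `w_j = E_j s`. The vectors `w_j` are pairwise orthogonal eigenvectors of
`H`, and cospectrality says exactly that `2 ⟪w_j, e_u⟫ = ‖w_j‖²`, i.e. the reflection in `w_j`
swaps `E_j e_u` and `E_j e_v`. Hence `R = I - 2P`, with `P` the orthogonal projection onto the span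
of the `w_j`, is a symmetric involution commuting with `H` and sending `e_u` to `e_v`.
Conversely, a matrix commuting with `H` commutes with every `E_j` (the eigenvalues are distinct),
so `(E_j)_vv = (R E_j R)_uu = (E_j)_uu`.
-/

open Matrix

variable {n ι K : Type*} [Fintype n] [Fintype ι]

namespace Matrix

theorem IsSymm.mulVec_dotProduct [CommSemiring K] {A : Matrix n n K} (hA : A.IsSymm)
    (x y : n → K) : A *ᵥ x ⬝ᵥ y = x ⬝ᵥ A *ᵥ y := by
  rw [dotProduct_comm, ← dotProduct_transpose_mulVec, hA.eq]

end Matrix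

section OrthProj

variable [Field K]

/-- Zero vectors contribute nothing, because `0⁻¹ = 0`. -/
def orthProj (w : ι → n → K) : Matrix n n K :=
  ∑ j, (w j ⬝ᵥ w j)⁻¹ • vecMulVec (w j) (w j)

variable (w : ι → n → K)

theorem orthProj_isSymm : (orthProj w).IsSymm := by
  simp only [IsSymm, orthProj, transpose_sum, transpose_smul, transpose_vecMulVec]

theorem orthProj_mul_self (hw : Pairwise fun i j => w i ⬝ᵥ w j = 0) :
    orthProj w * orthProj w = orthProj w := by
  simp only [orthProj, Finset.sum_mul_sum, smul_mul_smul_comm, vecMulVec_mul_vecMulVec]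
  refine Finset.sum_congr rfl fun j _ => ?_
  rw [Finset.sum_eq_single j (fun k _ hk => by simp [hw hk.symm]) (by simp)]
  by_cases hd : w j ⬝ᵥ w j = 0
  · simp [hd]
  · rw [vecMulVec_smul, smul_smul, mul_assoc, inv_mul_cancel₀ hd, mul_one]

theorem orthProj_mulVec (x : n → K) :
    orthProj w *ᵥ x = ∑ j, ((w j ⬝ᵥ x) / (w j ⬝ᵥ w j)) • w j := by
  simp only [orthProj, sum_mulVec, smul_mulVec, vecMulVec_mulVec, op_smul_eq_smul, smul_smul,
    div_eq_inv_mul]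

theorem commute_orthProj {H : Matrix n n K} (hH : H.IsSymm) {c : ι → K}
    (hw : ∀ j, H *ᵥ w j = c j • w j) : Commute H (orthProj w) := by
  refine Commute.sum_right _ _ _ fun j _ => (Commute.smul_right ?_ _)
  rw [Commute, SemiconjBy, mul_vecMulVec, vecMulVec_mul, ← mulVec_transpose, hH.eq, hw,
    smul_vecMulVec, vecMulVec_smul]

end OrthProj

section SpectralResolution

variable [Field K] {E : ι → Matrix n n K} (hEidem : ∀ j, E j * E j = E j)
  (hEorth : Pairwise fun j k => E j * E k = 0) (lam : ι → K)
include hEidem hEorth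

theorem sum_smul_mul_proj (j : ι) : (∑ k, lam k • E k) * E j = lam j • E j := by
  rw [Finset.sum_mul, Finset.sum_eq_single j (fun k _ hk => by rw [smul_mul_assoc, hEorth hk,
    smul_zero]) (by simp), smul_mul_assoc, hEidem]

theorem proj_mul_sum_smul (j : ι) : E j * (∑ k, lam k • E k) = lam j • E j := by
  rw [Finset.mul_sum, Finset.sum_eq_single j (fun k _ hk => by rw [mul_smul_comm, hEorth hk.symm,
    smul_zero]) (by simp), mul_smul_comm, hEidem]

theorem proj_mul_mul_proj_eq_zero (hlam : Function.Injective lam) {M : Matrix n n K}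
    (hM : Commute M (∑ k, lam k • E k)) {j k : ι} (hjk : j ≠ k) : E j * M * E k = 0 := by
  have h : lam k • (E j * M * E k) = lam j • (E j * M * E k) :=
    calc lam k • (E j * M * E k) = E j * (M * ∑ i, lam i • E i) * E k := by
          rw [← mul_smul_comm, ← sum_smul_mul_proj hEidem hEorth, mul_assoc, mul_assoc, mul_assoc]
      _ = E j * (∑ i, lam i • E i) * M * E k := by simp only [hM.eq, mul_assoc]
      _ = lam j • (E j * M * E k) := by
          rw [proj_mul_sum_smul hEidem hEorth, smul_mul_assoc, smul_mul_assoc]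
  exact (smul_eq_zero.mp (by rw [sub_smul, h, sub_self])).resolve_left
    (sub_ne_zero.mpr fun hkj => hjk (hlam hkj).symm)

theorem commute_proj_of_commute_sum_smul [DecidableEq n] (hEsum : ∑ j, E j = 1)
    (hlam : Function.Injective lam) {M : Matrix n n K} (hM : Commute M (∑ k, lam k • E k))
    (j : ι) : Commute M (E j) := by
  have hzero : ∀ {j k}, j ≠ k → E j * M * E k = 0 :=
    proj_mul_mul_proj_eq_zero hEidem hEorth lam hlam hM
  calc M * E j = (∑ k, E k) * M * E j := by rw [hEsum, one_mul]
    _ = E j * M * E j := by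
      rw [Finset.sum_mul, Finset.sum_mul, Finset.sum_eq_single j (fun k _ hk => hzero hk) (by simp)]
    _ = E j * M * ∑ k, E k := by
      rw [Finset.mul_sum, Finset.sum_eq_single j (fun k _ hk => hzero hk.symm) (by simp)]
    _ = E j * M := by rw [hEsum, mul_one]

end SpectralResolution

theorem Matrix.apply_diag_eq_of_commute [CommSemiring K] [DecidableEq n] {R A : Matrix n n K}
    (hR : R.IsSymm) (hR2 : R * R = 1) {u v : n} (hRu : R *ᵥ Pi.single u 1 = Pi.single v 1)
    (hA : Commute R A) : A u u = A v v := by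
  calc A u u = Pi.single u 1 ⬝ᵥ (A * (R * R)) *ᵥ Pi.single u 1 := by simp [hR2]
    _ = R *ᵥ Pi.single u 1 ⬝ᵥ A *ᵥ R *ᵥ Pi.single u 1 := by
      rw [hR.mulVec_dotProduct, mulVec_mulVec, mulVec_mulVec, ← mul_assoc, hA.eq]
    _ = A v v := by simp [hRu]

theorem two_mul_mulVec_dotProduct_single [CommRing K] [DecidableEq n] {E : Matrix n n K}
    (hE : E.IsSymm) (hEidem : E * E = E) {u v : n} (huv : E u u = E v v) :
    2 * (E *ᵥ (Pi.single u 1 - Pi.single v 1) ⬝ᵥ Pi.single u 1) =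
      E *ᵥ (Pi.single u 1 - Pi.single v 1) ⬝ᵥ E *ᵥ (Pi.single u 1 - Pi.single v 1) := by
  rw [hE.mulVec_dotProduct _ (E *ᵥ _), mulVec_mulVec, hEidem]
  simp only [mulVec_sub, mulVec_single, MulOpposite.op_one, one_smul, dotProduct_single,
    Pi.sub_apply, col_apply, huv, mul_one, dotProduct_sub, sub_dotProduct, single_dotProduct,
    one_mul, hE.apply u v]
  ring

theorem two_smul_orthProj_mulVec [Field K] [LinearOrder K] [IsStrictOrderedRing K]
    {w : ι → n → K} {x : n → K} (hw : ∀ j, 2 * (w j ⬝ᵥ x) = w j ⬝ᵥ w j) :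
    (2 : K) • (orthProj w *ᵥ x) = ∑ j, w j := by
  rw [orthProj_mulVec, Finset.smul_sum]
  refine Finset.sum_congr rfl fun j _ => ?_
  by_cases hd : w j ⬝ᵥ w j = 0
  · simp [dotProduct_self_eq_zero.mp hd]
  · rw [smul_smul, mul_div_assoc', hw, div_self hd, one_smul]

theorem stmt3_general {m r : ℕ} (H : Matrix (Fin m) (Fin m) ℝ)
    (lam : Fin r → ℝ) (E : Fin r → Matrix (Fin m) (Fin m) ℝ)
    (hH : H.IsSymm)
    (hlam : Function.Injective lam)
    (hEsymm : ∀ j, (E j).IsSymm)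
    (hEidem : ∀ j, E j * E j = E j)
    (hEorth : ∀ j k, j ≠ k → E j * E k = 0)
    (hEsum : ∑ j, E j = 1)
    (hspec : H = ∑ j, lam j • E j)
    (u v : Fin m) :
    (∀ j, (E j) u u = (E j) v v)
      ↔ ∃ R : Matrix (Fin m) (Fin m) ℝ, R.IsSymm ∧ R * R = 1 ∧
          R *ᵥ (Pi.single u 1 : Fin m → ℝ) = Pi.single v 1 ∧ R * H = H * R := by
  have hEorth' : Pairwise fun j k => E j * E k = 0 := fun j k => hEorth j k
  subst hspec
  constructor
  · intro hcos
    set s : Fin m → ℝ := Pi.single u 1 - Pi.single v 1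
    set w := fun j => E j *ᵥ s
    have hw : Pairwise fun i j => w i ⬝ᵥ w j = 0 := fun i j hij => by
      simp only [w, (hEsymm i).mulVec_dotProduct, mulVec_mulVec, hEorth' hij, zero_mulVec,
        dotProduct_zero]
    have hPu : (2 : ℝ) • (orthProj w *ᵥ Pi.single u 1) = s := by
      rw [two_smul_orthProj_mulVec fun j => two_mul_mulVec_dotProduct_single (hEsymm j)
        (hEidem j) (hcos j), ← sum_mulVec, hEsum, one_mulVec]
    refine ⟨1 - (2 : ℝ) • orthProj w, isSymm_one.sub ((orthProj_isSymm w).smul _), ?_, ?_, ?_⟩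
    · simp only [sub_mul, mul_sub, one_mul, mul_one, smul_mul_smul_comm, orthProj_mul_self w hw]
      module
    · rw [sub_mulVec, one_mulVec, smul_mulVec, hPu, sub_sub_cancel]
    · refine Commute.eq <| (Commute.one_left _).sub_left
        ((commute_orthProj w hH (c := lam) fun j => ?_).smul_right _).symm
      rw [mulVec_mulVec, sum_smul_mul_proj hEidem hEorth', smul_mulVec]
  · rintro ⟨R, hR, hR2, hRu, hRH⟩ j
    exact apply_diag_eq_of_commute hR hR2 hRu
      (commute_proj_of_commute_sum_smul hEidem hEorth' lam hEsum hlam hRH j)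

theorem stmt3 {m r : ℕ} (H : Matrix (Fin m) (Fin m) ℝ)
    (lam : Fin r → ℝ) (E : Fin r → Matrix (Fin m) (Fin m) ℝ)
    (hH : H.IsSymm)
    (hlam : Function.Injective lam)
    (hEsymm : ∀ j, (E j).IsSymm)
    (hEidem : ∀ j, E j * E j = E j)
    (hEorth : ∀ j k, j ≠ k → E j * E k = 0)
    (hEsum : ∑ j, E j = 1)
    (hEnz : ∀ j, E j ≠ 0)
    (hspec : H = ∑ j, lam j • E j)
    (u v : Fin m) :
    (∀ j, (E j) u u = (E j) v v)
      ↔ ∃ R : Matrix (Fin m) (Fin m) ℝ, R.IsSymm ∧ R * R = 1 ∧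
          R *ᵥ (Pi.single u 1 : Fin m → ℝ) = Pi.single v 1 ∧ R * H = H * R :=
  stmt3_general H lam E hH hlam hEsymm hEidem hEorth hEsum hspec u v
end

section
/- Let H be a Hermitian matrix and P a permutation matrix such that H = Pᵀ H P and P eᵤ = eᵥ. Then u and v are cospectral with respect to H, i.e., (Eⱼ)ᵤᵤ = (Eⱼ)ᵥᵥ for every spectral projection Eⱼ of H. -/
/-!
If `H = ∑ λⱼ Eⱼ` with distinct `λⱼ` and complete orthogonal idempotents `Eⱼ`, every `Q` commuting
with `H` commutes with each `Eⱼ`: from `Eᵢ H = λᵢ Eᵢ` and `H Eⱼ = λⱼ Eⱼ` one gets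
`(λᵢ - λⱼ) Eᵢ Q Eⱼ = 0`, so `Eᵢ Q Eⱼ = 0` for `i ≠ j`, and both `Eⱼ Q` and `Q Eⱼ` equal `Eⱼ Q Eⱼ`.
A permutation matrix `P` with `Pᵀ H P = H` commutes with `H`, hence with every `Eⱼ`, so `Eⱼ` is
invariant under permuting its rows and columns simultaneously by `σ`, and `σ v = u`.
-/

open Matrix

variable {𝕜 A ι : Type*} [Fintype ι] {e : ι → A}

namespace OrthogonalIdempotents

section Semiring

variable [CommSemiring 𝕜] [Semiring A] [Algebra 𝕜 A]

theorem mul_sum_smul (he : OrthogonalIdempotents e) (c : ι → 𝕜) (j : ι) :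
    e j * ∑ i, c i • e i = c j • e j := by
  classical
  simp only [Finset.mul_sum, mul_smul_comm, he.mul_eq, smul_ite, smul_zero,
    Finset.sum_ite_eq, Finset.mem_univ, if_true]

theorem sum_smul_mul (he : OrthogonalIdempotents e) (c : ι → 𝕜) (j : ι) :
    (∑ i, c i • e i) * e j = c j • e j := by
  classical
  simp only [Finset.sum_mul, smul_mul_assoc, he.mul_eq, smul_ite, smul_zero,
    Finset.sum_ite_eq', Finset.mem_univ, if_true]

end Semiring

variable [Field 𝕜] [Ring A] [Algebra 𝕜 A]

theorem mul_mul_eq_zero_of_commute_sum_smul (he : OrthogonalIdempotents e) {c : ι → 𝕜}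
    (hc : Function.Injective c) {a : A} (ha : Commute a (∑ i, c i • e i)) {i j : ι}
    (hij : i ≠ j) : e i * a * e j = 0 := by
  have h : (c i - c j) • (e i * a * e j) = 0 := by
    rw [sub_smul, sub_eq_zero]
    calc c i • (e i * a * e j) = e i * (∑ k, c k • e k) * a * e j := by
          rw [he.mul_sum_smul, smul_mul_assoc, smul_mul_assoc]
      _ = e i * a * ((∑ k, c k • e k) * e j) := by
          rw [mul_assoc (e i), ← ha.eq, ← mul_assoc, mul_assoc _ _ (e j)]
      _ = c j • (e i * a * e j) := by rw [he.sum_smul_mul, mul_smul_comm]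
  exact (smul_eq_zero.mp h).resolve_left (sub_ne_zero.mpr (hc.ne hij))

end OrthogonalIdempotents

theorem CompleteOrthogonalIdempotents.commute_of_commute_sum_smul [Field 𝕜] [Ring A]
    [Algebra 𝕜 A] (he : CompleteOrthogonalIdempotents e) {c : ι → 𝕜}
    (hc : Function.Injective c) {a : A} (ha : Commute a (∑ i, c i • e i)) (j : ι) :
    Commute a (e j) := by
  have hoff : ∀ i, i ≠ j → e i * a * e j = 0 ∧ e j * a * e i = 0 := fun i hij =>
    ⟨he.toOrthogonalIdempotents.mul_mul_eq_zero_of_commute_sum_smul hc ha hij,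
      he.toOrthogonalIdempotents.mul_mul_eq_zero_of_commute_sum_smul hc ha hij.symm⟩
  have hleft : e j * a = e j * a * e j := by
    conv_lhs => rw [← mul_one (e j * a), ← he.complete, Finset.mul_sum]
    exact Fintype.sum_eq_single j fun i hij => (hoff i hij).2
  have hright : a * e j = e j * a * e j := by
    conv_lhs => rw [← one_mul (a * e j), ← he.complete, Finset.sum_mul]
    simp_rw [← mul_assoc]
    exact Fintype.sum_eq_single j fun i hij => (hoff i hij).1
  exact hright.trans hleft.symm

namespace Matrix

variable {n R : Type*} [Fintype n] [DecidableEq n]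

theorem apply_perm_apply_perm_of_commute_permMatrix [Semiring R] {σ : Equiv.Perm n}
    {A : Matrix n n R} (h : Commute (σ.permMatrix R) A) (i j : n) :
    A (σ i) (σ j) = A i j := by
  have := congrFun (congrFun h.eq i) (σ j)
  simpa [PEquiv.toMatrix_toPEquiv_mul, PEquiv.mul_toMatrix_toPEquiv] using this

theorem commute_permMatrix_of_transpose_mul_mul_eq [Semiring R] {σ : Equiv.Perm n}
    {A : Matrix n n R} (h : (σ.permMatrix R)ᵀ * A * σ.permMatrix R = A) :
    Commute (σ.permMatrix R) A := by
  have hinv : σ.permMatrix R * (σ.permMatrix R)ᵀ = 1 := by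
    rw [transpose_permMatrix, ← permMatrix_mul, inv_mul_cancel, permMatrix_one]
  calc σ.permMatrix R * A = σ.permMatrix R * ((σ.permMatrix R)ᵀ * A * σ.permMatrix R) := by
        rw [h]
    _ = A * σ.permMatrix R := by
        rw [← Matrix.mul_assoc, ← Matrix.mul_assoc, hinv, Matrix.one_mul]

end Matrix

theorem stmt4_general {m r : ℕ} (H : Matrix (Fin m) (Fin m) ℂ)
    (lam : Fin r → ℝ) (E : Fin r → Matrix (Fin m) (Fin m) ℂ)
    (hlam : Function.Injective lam)
    (hEorth : ∀ j k, j ≠ k → E j * E k = 0)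
    (hEsum : ∑ j, E j = 1)
    (hspec : H = ∑ j, (lam j : ℂ) • E j)
    (u v : Fin m) (σ : Equiv.Perm (Fin m)) (P : Matrix (Fin m) (Fin m) ℂ)
    (hP : ∀ i j, P i j = if σ i = j then 1 else 0)
    (hHP : H = Pᵀ * H * P)
    (hPu : P *ᵥ (Pi.single u 1 : Fin m → ℂ) = Pi.single v 1) :
    ∀ j, (E j) u u = (E j) v v := by
  intro j
  have hE : CompleteOrthogonalIdempotents E :=
    CompleteOrthogonalIdempotents.iff_ortho_complete.mpr ⟨hEorth, hEsum⟩
  obtain rfl : P = σ.permMatrix ℂ := Matrix.ext fun i k => by simp [hP, Equiv.toPEquiv_apply]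
  have hσv : σ v = u := by
    simpa [permMatrix_mulVec, Pi.single_apply] using congrFun hPu v
  have hcomm : Commute (σ.permMatrix ℂ) H := commute_permMatrix_of_transpose_mul_mul_eq hHP.symm
  have hcommE : Commute (σ.permMatrix ℂ) (E j) :=
    hE.commute_of_commute_sum_smul (Complex.ofReal_injective.comp hlam) (hspec ▸ hcomm) j
  simpa [hσv] using apply_perm_apply_perm_of_commute_permMatrix hcommE v v

theorem stmt4 {m r : ℕ} (H : Matrix (Fin m) (Fin m) ℂ)
    (lam : Fin r → ℝ) (E : Fin r → Matrix (Fin m) (Fin m) ℂ)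
    (hH : H.IsHermitian)
    (hlam : Function.Injective lam)
    (hEherm : ∀ j, (E j).IsHermitian)
    (hEidem : ∀ j, E j * E j = E j)
    (hEorth : ∀ j k, j ≠ k → E j * E k = 0)
    (hEsum : ∑ j, E j = 1)
    (hEnz : ∀ j, E j ≠ 0)
    (hspec : H = ∑ j, (lam j : ℂ) • E j)
    (u v : Fin m) (σ : Equiv.Perm (Fin m)) (P : Matrix (Fin m) (Fin m) ℂ)
    (hP : ∀ i j, P i j = if σ i = j then 1 else 0)
    (hHP : H = Pᵀ * H * P)
    (hPu : P *ᵥ (Pi.single u 1 : Fin m → ℂ) = Pi.single v 1) :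
    ∀ j, (E j) u u = (E j) v v :=
  stmt4_general H lam E hlam hEorth hEsum hspec u v σ P hP hHP hPu
end

section
/- Let H be an m×m Hermitian matrix with spectral decomposition H = Σⱼ₌₁ʳ λⱼEⱼ. The vectors E₁eᵤ, …, Eᵣeᵤ that are nonzero form an orthogonal spanning set of the H-invariant subspace of ℂᵐ generated by eᵤ (the column space of the walk matrix Wᵤ(H) = [eᵤ | Heᵤ | … | Hᵐ⁻¹eᵤ]). Moreover, u and v are parallel with respect to H with σᵤ(H) = σᵥ(H) if and only if the H-invariant subspaces generated by eᵤ and eᵥ are equal. -/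
/-!
Orthogonality of the vectors `Eⱼ eᵤ` comes from `Eⱼᴴ Eₖ = Eⱼ Eₖ = 0`. Since `p(H) = Σⱼ p(λⱼ) Eⱼ`
for every polynomial `p`, each `Hⁿ eᵤ` lies in the span of the `Eⱼ eᵤ`, and conversely each
`Eⱼ = pⱼ(H)` for the Lagrange basis polynomial `pⱼ` at the distinct eigenvalues, so `Eⱼ eᵤ` lies in
the `H`-invariant subspace generated by `eᵤ`. Applying `Eⱼ` to the subspace `span {Eₖ eᵤ}` gives
the line `span {Eⱼ eᵤ}`; hence the subspaces generated by `eᵤ` and `eᵥ` agree iff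
`span {Eⱼ eᵤ} = span {Eⱼ eᵥ}` for all `j`, which is parallelism with equal eigenvalue supports.
-/

open Matrix Polynomial Submodule Set

theorem Submodule.span_singleton_eq_span_singleton_iff_exists_smul {K V : Type*} [Field K]
    [AddCommGroup V] [Module K V] {x y : V} :
    K ∙ x = K ∙ y ↔ (∃ c : K, x = c • y) ∧ (x = 0 ↔ y = 0) := by
  rw [span_singleton_eq_span_singleton]
  constructor
  · rintro ⟨z, rfl⟩
    exact ⟨⟨(z⁻¹ : Kˣ), (inv_smul_smul z x).symm⟩, (smul_eq_zero_iff_eq z).symm⟩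
  · rintro ⟨⟨c, rfl⟩, hzero⟩
    rcases eq_or_ne y 0 with rfl | hy
    · exact ⟨1, by simp⟩
    have hc : c ≠ 0 := fun hc => hy (hzero.mp (by rw [hc, zero_smul]))
    exact ⟨(Units.mk0 c hc)⁻¹, by rw [Units.smul_def, Units.val_inv_eq_inv_val, Units.val_mk0, inv_smul_smul₀ hc]⟩

theorem Matrix.IsHermitian.star_mulVec_dotProduct_mulVec_eq_zero {n R : Type*} [Fintype n]
    [CommSemiring R] [StarRing R] {A B : Matrix n n R} (hA : A.IsHermitian) (hAB : A * B = 0)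
    (x y : n → R) : star (A *ᵥ x) ⬝ᵥ (B *ᵥ y) = 0 := by
  rw [star_mulVec, hA.eq, dotProduct_mulVec, vecMul_vecMul, ← dotProduct_mulVec, hAB,
    zero_mulVec, dotProduct_zero]

section Idempotents

variable {R A ι : Type*} [CommSemiring R] [Semiring A] [Algebra R A] [Fintype ι] {E : ι → A}

theorem OrthogonalIdempotents.sum_smul_mul_sum_smul (hE : OrthogonalIdempotents E)
    (a b : ι → R) : (∑ j, a j • E j) * (∑ j, b j • E j) = ∑ j, (a j * b j) • E j := by
  classical
  simp only [Finset.sum_mul_sum, smul_mul_smul_comm, hE.mul_eq, smul_ite, smul_zero,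
    Finset.sum_ite_eq, Finset.mem_univ, if_true]

theorem CompleteOrthogonalIdempotents.sum_smul_pow (hE : CompleteOrthogonalIdempotents E)
    (c : ι → R) (k : ℕ) : (∑ j, c j • E j) ^ k = ∑ j, c j ^ k • E j := by
  induction k with
  | zero => simp [hE.complete]
  | succ k ih =>
    simp only [pow_succ, ih, hE.toOrthogonalIdempotents.sum_smul_mul_sum_smul]

theorem CompleteOrthogonalIdempotents.aeval_sum_smul (hE : CompleteOrthogonalIdempotents E)
    (c : ι → R) (p : R[X]) : aeval (∑ j, c j • E j) p = ∑ j, p.eval (c j) • E j := by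
  induction p using Polynomial.induction_on' with
  | add p q hp hq => simp only [map_add, hp, hq, eval_add, add_smul, Finset.sum_add_distrib]
  | monomial k a =>
    rw [aeval_monomial, ← Algebra.smul_def, hE.sum_smul_pow, Finset.smul_sum]
    simp only [smul_smul, eval_monomial]

end Idempotents

section Matrix

variable {K n ι : Type*} [Fintype n] [DecidableEq n]

theorem Matrix.aeval_mulVec_mem_span_range_pow_mulVec [CommSemiring K] (H : Matrix n n K)
    (p : K[X]) (w : n → K) : aeval H p *ᵥ w ∈ span K (range fun k : ℕ => (H ^ k) *ᵥ w) := by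
  rw [aeval_eq_sum_range, sum_mulVec]
  exact sum_mem fun k _ => by
    rw [smul_mulVec]
    exact smul_mem _ _ (subset_span ⟨k, rfl⟩)

variable [Field K] {E : ι → Matrix n n K}

theorem CompleteOrthogonalIdempotents.span_range_mulVec_eq_span_range_pow_mulVec [Fintype ι]
    (hE : CompleteOrthogonalIdempotents E) {c : ι → K} (hc : Function.Injective c) (w : n → K) :
    span K (range fun j => E j *ᵥ w) = span K (range fun k : ℕ => (∑ j, c j • E j) ^ k *ᵥ w) := by
  classical
  apply le_antisymm
  · rw [span_le]
    rintro _ ⟨j, rfl⟩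
    have hEj : E j = aeval (∑ j, c j • E j) (Lagrange.basis Finset.univ c j) := by
      rw [hE.aeval_sum_smul, Finset.sum_eq_single j
        (fun k _ hk => by rw [Lagrange.eval_basis_of_ne hk.symm (Finset.mem_univ k), zero_smul])
        (by simp), Lagrange.eval_basis_self hc.injOn (Finset.mem_univ j), one_smul]
    dsimp only
    rw [SetLike.mem_coe, hEj]
    exact aeval_mulVec_mem_span_range_pow_mulVec _ _ w
  · rw [span_le]
    rintro _ ⟨k, rfl⟩
    dsimp only
    rw [SetLike.mem_coe, hE.sum_smul_pow, sum_mulVec]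
    exact sum_mem fun j _ => by
      rw [smul_mulVec]
      exact smul_mem _ _ (subset_span ⟨j, rfl⟩)

theorem OrthogonalIdempotents.map_mulVecLin_span_range_mulVec (hE : OrthogonalIdempotents E)
    (j : ι) (w : n → K) :
    (span K (range fun k => E k *ᵥ w)).map (E j).mulVecLin = K ∙ (E j *ᵥ w) := by
  rw [map_span, ← range_comp]
  apply le_antisymm
  · rw [span_le]
    rintro _ ⟨k, rfl⟩
    simp only [Function.comp_apply, mulVecLin_apply, mulVec_mulVec]
    by_cases hjk : j = k
    · rw [← hjk, (hE.idem j).eq]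
      exact subset_span rfl
    · rw [hE.ortho hjk, zero_mulVec]
      exact zero_mem _
  · rw [span_singleton_le_iff_mem]
    refine subset_span ⟨j, ?_⟩
    simp [mulVec_mulVec, (hE.idem j).eq]

theorem OrthogonalIdempotents.span_range_mulVec_eq_iff (hE : OrthogonalIdempotents E)
    (w w' : n → K) :
    span K (range fun j => E j *ᵥ w) = span K (range fun j => E j *ᵥ w') ↔
      ∀ j, K ∙ (E j *ᵥ w) = K ∙ (E j *ᵥ w') := by
  refine ⟨fun h j => ?_, fun h => ?_⟩
  · rw [← hE.map_mulVecLin_span_range_mulVec, ← hE.map_mulVecLin_span_range_mulVec, h]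
  · simp only [span_range_eq_iSup, h]

end Matrix

theorem stmt6_general {m r : ℕ} (H : Matrix (Fin m) (Fin m) ℂ)
    (lam : Fin r → ℝ) (E : Fin r → Matrix (Fin m) (Fin m) ℂ)
    (hlam : Function.Injective lam)
    (hEherm : ∀ j, (E j).IsHermitian)
    (hEidem : ∀ j, E j * E j = E j)
    (hEorth : ∀ j k, j ≠ k → E j * E k = 0)
    (hEsum : ∑ j, E j = 1)
    (hspec : H = ∑ j, (lam j : ℂ) • E j)
    (u v : Fin m) :
    (∀ j k, j ≠ k →
        dotProduct (star ((E j) *ᵥ (Pi.single u 1 : Fin m → ℂ)))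
          ((E k) *ᵥ (Pi.single u 1 : Fin m → ℂ)) = 0) ∧
    Submodule.span ℂ (Set.range fun j => (E j) *ᵥ (Pi.single u 1 : Fin m → ℂ)) =
      Submodule.span ℂ (Set.range fun n : ℕ => (H ^ n) *ᵥ (Pi.single u 1 : Fin m → ℂ)) ∧
    (((∀ j, ∃ c : ℂ,
        (E j) *ᵥ (Pi.single u 1 : Fin m → ℂ) = c • ((E j) *ᵥ (Pi.single v 1 : Fin m → ℂ))) ∧
      (∀ j, (E j) *ᵥ (Pi.single u 1 : Fin m → ℂ) = 0 ↔
        (E j) *ᵥ (Pi.single v 1 : Fin m → ℂ) = 0))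
      ↔ Submodule.span ℂ (Set.range fun n : ℕ => (H ^ n) *ᵥ (Pi.single u 1 : Fin m → ℂ)) =
          Submodule.span ℂ (Set.range fun n : ℕ => (H ^ n) *ᵥ (Pi.single v 1 : Fin m → ℂ))) := by
  have hE : CompleteOrthogonalIdempotents E := ⟨⟨hEidem, hEorth⟩, hEsum⟩
  have hspan (w : Fin m → ℂ) :
      span ℂ (range fun j => E j *ᵥ w) = span ℂ (range fun k : ℕ => (H ^ k) *ᵥ w) := by
    rw [hspec]
    exact hE.span_range_mulVec_eq_span_range_pow_mulVec (Complex.ofReal_injective.comp hlam) w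
  refine ⟨fun j k hjk => (hEherm j).star_mulVec_dotProduct_mulVec_eq_zero (hEorth j k hjk) _ _,
    hspan _, ?_⟩
  rw [← hspan, ← hspan, hE.span_range_mulVec_eq_iff]
  simp only [span_singleton_eq_span_singleton_iff_exists_smul, forall_and]

theorem stmt6 {m r : ℕ} (H : Matrix (Fin m) (Fin m) ℂ)
    (lam : Fin r → ℝ) (E : Fin r → Matrix (Fin m) (Fin m) ℂ)
    (hH : H.IsHermitian)
    (hlam : Function.Injective lam)
    (hEherm : ∀ j, (E j).IsHermitian)
    (hEidem : ∀ j, E j * E j = E j)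
    (hEorth : ∀ j k, j ≠ k → E j * E k = 0)
    (hEsum : ∑ j, E j = 1)
    (hEnz : ∀ j, E j ≠ 0)
    (hspec : H = ∑ j, (lam j : ℂ) • E j)
    (u v : Fin m) :
    (∀ j k, j ≠ k →
        dotProduct (star ((E j) *ᵥ (Pi.single u 1 : Fin m → ℂ)))
          ((E k) *ᵥ (Pi.single u 1 : Fin m → ℂ)) = 0) ∧
    Submodule.span ℂ (Set.range fun j => (E j) *ᵥ (Pi.single u 1 : Fin m → ℂ)) =
      Submodule.span ℂ (Set.range fun n : ℕ => (H ^ n) *ᵥ (Pi.single u 1 : Fin m → ℂ)) ∧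
    (((∀ j, ∃ c : ℂ,
        (E j) *ᵥ (Pi.single u 1 : Fin m → ℂ) = c • ((E j) *ᵥ (Pi.single v 1 : Fin m → ℂ))) ∧
      (∀ j, (E j) *ᵥ (Pi.single u 1 : Fin m → ℂ) = 0 ↔
        (E j) *ᵥ (Pi.single v 1 : Fin m → ℂ) = 0))
      ↔ Submodule.span ℂ (Set.range fun n : ℕ => (H ^ n) *ᵥ (Pi.single u 1 : Fin m → ℂ)) =
          Submodule.span ℂ (Set.range fun n : ℕ => (H ^ n) *ᵥ (Pi.single v 1 : Fin m → ℂ))) :=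
  stmt6_general H lam E hlam hEherm hEidem hEorth hEsum hspec u v
end

section
/- Let H be an m×m real symmetric matrix and u,v strongly cospectral indices. Then |σ⁻ᵤᵥ(H)| = 1 (the set {λⱼ : Eⱼeᵤ = −Eⱼeᵥ} is a singleton) if and only if eᵤ − eᵥ is an eigenvector of H. Similarly, |σ⁺ᵤᵥ(H)| = 1 if and only if eᵤ + eᵥ is an eigenvector of H. -/
/-!
If `H = ∑ λⱼ Eⱼ` with distinct `λⱼ` and the `Eⱼ` orthogonal idempotents summing to `1`,
a nonzero vector `x` is an eigenvector of `H` exactly when a single `Eⱼ x` is nonzero.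
For `x = eᵤ ∓ eᵥ`, strong cospectrality (`Eⱼ eᵤ = ±Eⱼ eᵥ`) makes `Eⱼ x ≠ 0` equivalent to
`Eⱼ eᵤ = ∓Eⱼ eᵥ ≠ 0`, i.e. to `λⱼ ∈ σ∓ᵤᵥ(H)`.
-/

open Matrix

section SignedPair
variable {M : Type*} [AddCommGroup M] [IsAddTorsionFree M] {a b : M}

lemma add_self_eq_zero_iff_of_isAddTorsionFree : a + a = 0 ↔ a = 0 := by
  rw [← two_nsmul, two_nsmul_eq_zero]

lemma sub_ne_zero_iff_of_eq_or_eq_neg (h : a = b ∨ a = -b) :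
    a - b ≠ 0 ↔ a ≠ 0 ∧ a = -b := by
  rcases h with rfl | rfl
  · simp [self_eq_neg]
  · simp [← neg_add', add_self_eq_zero_iff_of_isAddTorsionFree]

lemma add_ne_zero_iff_of_eq_or_eq_neg (h : a = b ∨ a = -b) :
    a + b ≠ 0 ↔ a ≠ 0 ∧ a = b := by
  rcases h with rfl | rfl
  · simp [add_self_eq_zero_iff_of_isAddTorsionFree]
  · simp [neg_eq_self]

end SignedPair

section SpectralDecomposition
variable {ι n K : Type*} [Fintype ι] [Fintype n] [DecidableEq n] [Field K]
  {E : ι → Matrix n n K} {lam : ι → K}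

lemma sum_mulVec_eq_self (hEsum : ∑ j, E j = 1) (x : n → K) : ∑ j, E j *ᵥ x = x := by
  rw [← sum_mulVec, hEsum, one_mulVec]

lemma mul_sum_smul_eq_smul (hEidem : ∀ j, E j * E j = E j)
    (hEorth : ∀ j k, j ≠ k → E j * E k = 0) (j : ι) :
    E j * ∑ k, lam k • E k = lam j • E j := by
  rw [Finset.mul_sum, Finset.sum_eq_single j (fun k _ hk => by
    rw [Matrix.mul_smul, hEorth j k hk.symm, smul_zero]) (by simp), Matrix.mul_smul, hEidem]

lemma sum_smul_mulVec_eq_smul_of_forall_ne (hEsum : ∑ j, E j = 1) {x : n → K} {j : ι}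
    (hzero : ∀ k, k ≠ j → E k *ᵥ x = 0) :
    (∑ k, lam k • E k) *ᵥ x = lam j • x := by
  have hx : E j *ᵥ x = x :=
    calc E j *ᵥ x = ∑ k, E k *ᵥ x :=
          (Finset.sum_eq_single j (fun k _ hk => hzero k hk) (by simp)).symm
      _ = x := sum_mulVec_eq_self hEsum x
  rw [sum_mulVec, Finset.sum_eq_single j
    (fun k _ hk => by rw [smul_mulVec, hzero k hk, smul_zero]) (by simp), smul_mulVec, hx]

lemma eq_of_mulVec_ne_zero_of_sum_smul_mulVec_eq_smul (hEidem : ∀ j, E j * E j = E j)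
    (hEorth : ∀ j k, j ≠ k → E j * E k = 0) {x : n → K} {θ : K}
    (hθ : (∑ k, lam k • E k) *ᵥ x = θ • x) {j : ι} (hj : E j *ᵥ x ≠ 0) : lam j = θ := by
  have h : lam j • (E j *ᵥ x) = θ • (E j *ᵥ x) := by
    rw [← smul_mulVec, ← mul_sum_smul_eq_smul hEidem hEorth, ← mulVec_mulVec, hθ, mulVec_smul]
  exact smul_left_injective K hj h

theorem existsUnique_mulVec_ne_zero_iff_exists_sum_smul_mulVec_eq_smul
    (hlam : Function.Injective lam) (hEidem : ∀ j, E j * E j = E j)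
    (hEorth : ∀ j k, j ≠ k → E j * E k = 0) (hEsum : ∑ j, E j = 1)
    {x : n → K} (hx : x ≠ 0) :
    (∃! j, E j *ᵥ x ≠ 0) ↔ ∃ θ : K, (∑ j, lam j • E j) *ᵥ x = θ • x := by
  constructor
  · rintro ⟨j, -, huniq⟩
    exact ⟨lam j, sum_smul_mulVec_eq_smul_of_forall_ne hEsum
      fun k hk => not_not.mp (mt (huniq k) hk)⟩
  · rintro ⟨θ, hθ⟩
    obtain ⟨j, hj⟩ : ∃ j, E j *ᵥ x ≠ 0 := by
      by_contra! h
      exact hx (by rw [← sum_mulVec_eq_self hEsum x, Finset.sum_eq_zero fun j _ => h j])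
    have heig : ∀ k, E k *ᵥ x ≠ 0 → lam k = θ := fun k =>
      eq_of_mulVec_ne_zero_of_sum_smul_mulVec_eq_smul hEidem hEorth hθ
    exact ⟨j, hj, fun k hk => hlam ((heig k hk).trans (heig j hj).symm)⟩

end SpectralDecomposition

theorem stmt10_general {m r : ℕ} (H : Matrix (Fin m) (Fin m) ℝ)
    (lam : Fin r → ℝ) (E : Fin r → Matrix (Fin m) (Fin m) ℝ)
    (hlam : Function.Injective lam)
    (hEidem : ∀ j, E j * E j = E j)
    (hEorth : ∀ j k, j ≠ k → E j * E k = 0)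
    (hEsum : ∑ j, E j = 1)
    (hspec : H = ∑ j, lam j • E j)
    (u v : Fin m) (huv : u ≠ v)
    (hsc : ∀ j, (E j) *ᵥ (Pi.single u 1 : Fin m → ℝ) = (E j) *ᵥ (Pi.single v 1 : Fin m → ℝ) ∨
      (E j) *ᵥ (Pi.single u 1 : Fin m → ℝ) = -((E j) *ᵥ (Pi.single v 1 : Fin m → ℝ))) :
    ((∃! j, (E j) *ᵥ (Pi.single u 1 : Fin m → ℝ) ≠ 0 ∧
        (E j) *ᵥ (Pi.single u 1 : Fin m → ℝ) = -((E j) *ᵥ (Pi.single v 1 : Fin m → ℝ)))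
      ↔ ∃ θ : ℝ, H *ᵥ ((Pi.single u 1 : Fin m → ℝ) - Pi.single v 1) =
          θ • ((Pi.single u 1 : Fin m → ℝ) - Pi.single v 1)) ∧
    ((∃! j, (E j) *ᵥ (Pi.single u 1 : Fin m → ℝ) ≠ 0 ∧
        (E j) *ᵥ (Pi.single u 1 : Fin m → ℝ) = (E j) *ᵥ (Pi.single v 1 : Fin m → ℝ))
      ↔ ∃ θ : ℝ, H *ᵥ ((Pi.single u 1 : Fin m → ℝ) + Pi.single v 1) =
          θ • ((Pi.single u 1 : Fin m → ℝ) + Pi.single v 1)) := by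
  subst hspec
  have hsub : (Pi.single u 1 - Pi.single v 1 : Fin m → ℝ) ≠ 0 := fun h => by
    simpa [huv] using congrFun h u
  have hadd : (Pi.single u 1 + Pi.single v 1 : Fin m → ℝ) ≠ 0 := fun h => by
    simpa [huv] using congrFun h u
  constructor
  · rw [← existsUnique_mulVec_ne_zero_iff_exists_sum_smul_mulVec_eq_smul
      hlam hEidem hEorth hEsum hsub]
    exact existsUnique_congr fun j => by
      rw [mulVec_sub, sub_ne_zero_iff_of_eq_or_eq_neg (hsc j)]
  · rw [← existsUnique_mulVec_ne_zero_iff_exists_sum_smul_mulVec_eq_smul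
      hlam hEidem hEorth hEsum hadd]
    exact existsUnique_congr fun j => by
      rw [mulVec_add, add_ne_zero_iff_of_eq_or_eq_neg (hsc j)]

theorem stmt10 {m r : ℕ} (H : Matrix (Fin m) (Fin m) ℝ)
    (lam : Fin r → ℝ) (E : Fin r → Matrix (Fin m) (Fin m) ℝ)
    (hH : H.IsSymm)
    (hlam : Function.Injective lam)
    (hEsymm : ∀ j, (E j).IsSymm)
    (hEidem : ∀ j, E j * E j = E j)
    (hEorth : ∀ j k, j ≠ k → E j * E k = 0)
    (hEsum : ∑ j, E j = 1)
    (hEnz : ∀ j, E j ≠ 0)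
    (hspec : H = ∑ j, lam j • E j)
    (u v : Fin m) (huv : u ≠ v)
    (hsc : ∀ j, (E j) *ᵥ (Pi.single u 1 : Fin m → ℝ) = (E j) *ᵥ (Pi.single v 1 : Fin m → ℝ) ∨
      (E j) *ᵥ (Pi.single u 1 : Fin m → ℝ) = -((E j) *ᵥ (Pi.single v 1 : Fin m → ℝ))) :
    ((∃! j, (E j) *ᵥ (Pi.single u 1 : Fin m → ℝ) ≠ 0 ∧
        (E j) *ᵥ (Pi.single u 1 : Fin m → ℝ) = -((E j) *ᵥ (Pi.single v 1 : Fin m → ℝ)))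
      ↔ ∃ θ : ℝ, H *ᵥ ((Pi.single u 1 : Fin m → ℝ) - Pi.single v 1) =
          θ • ((Pi.single u 1 : Fin m → ℝ) - Pi.single v 1)) ∧
    ((∃! j, (E j) *ᵥ (Pi.single u 1 : Fin m → ℝ) ≠ 0 ∧
        (E j) *ᵥ (Pi.single u 1 : Fin m → ℝ) = (E j) *ᵥ (Pi.single v 1 : Fin m → ℝ))
      ↔ ∃ θ : ℝ, H *ᵥ ((Pi.single u 1 : Fin m → ℝ) + Pi.single v 1) =
          θ • ((Pi.single u 1 : Fin m → ℝ) + Pi.single v 1)) :=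
  stmt10_general H lam E hlam hEidem hEorth hEsum hspec u v huv hsc
end

section
/- Let m ≥ 3 and H be an m×m irreducible real symmetric matrix with strongly cospectral indices u,v. Then it is impossible that both eᵤ + eᵥ and eᵤ − eᵥ are eigenvectors of H; equivalently, |σ⁺ᵤᵥ(H)| and |σ⁻ᵤᵥ(H)| cannot both equal 1. -/
/-!
Adding and subtracting the eigen-equations of `eᵤ + eᵥ` and `eᵤ - eᵥ` shows that `H eᵤ` and
`H eᵥ` lie in `span {eᵤ, eᵥ}`: every row outside `{u, v}` vanishes on the columns `u` and `v`.
So the complement of `{u, v}`, nonempty since `m ≥ 3`, is a proper block with no edges into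
`{u, v}`, contradicting irreducibility.
-/

open Matrix

namespace Matrix

variable {n K : Type*} [Fintype n] [DecidableEq n] [Field K] [NeZero (2 : K)]

theorem apply_eq_zero_of_mulVec_single_add_sub_eigen {H : Matrix n n K} {u v j : n}
    (hju : j ≠ u) (hjv : j ≠ v)
    (hadd : ∃ θ : K,
      H *ᵥ (Pi.single u 1 + Pi.single v 1) = θ • (Pi.single u 1 + Pi.single v 1))
    (hsub : ∃ θ : K,
      H *ᵥ (Pi.single u 1 - Pi.single v 1) = θ • (Pi.single u 1 - Pi.single v 1)) :
    H j u = 0 ∧ H j v = 0 := by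
  obtain ⟨θ₁, h₁⟩ := hadd
  obtain ⟨θ₂, h₂⟩ := hsub
  have e₁ : H j u + H j v = 0 := by
    simpa [mulVec_add, mulVec_single, hju, hjv] using congrFun h₁ j
  have e₂ : H j u - H j v = 0 := by
    simpa [mulVec_sub, mulVec_single, hju, hjv] using congrFun h₂ j
  have h2u : (2 : K) * H j u = 0 := by linear_combination e₁ + e₂
  have h2v : (2 : K) * H j v = 0 := by linear_combination e₁ - e₂
  exact ⟨(mul_eq_zero.mp h2u).resolve_left two_ne_zero,
    (mul_eq_zero.mp h2v).resolve_left two_ne_zero⟩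

end Matrix

theorem Fintype.exists_ne_ne_of_two_lt_card {α : Type*} [Fintype α] [DecidableEq α]
    (h : 2 < Fintype.card α) (u v : α) : ∃ w, w ≠ u ∧ w ≠ v := by
  have hcard : ({u, v} : Finset α).card < Finset.univ.card :=
    Finset.card_le_two.trans_lt (h.trans_eq Finset.card_univ.symm)
  obtain ⟨w, -, hw⟩ := Finset.exists_mem_notMem_of_card_lt_card hcard
  exact ⟨w, by simpa [not_or] using hw⟩

theorem stmt11_general {m : ℕ} (hm : 3 ≤ m) (H : Matrix (Fin m) (Fin m) ℝ)
    (hirr : ∀ S : Set (Fin m), (∀ i ∈ S, ∀ j, j ∉ S → H i j = 0) → S = ∅ ∨ S = Set.univ)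
    (u v : Fin m) :
    ¬ ((∃ θ : ℝ, H *ᵥ ((Pi.single u 1 : Fin m → ℝ) + Pi.single v 1) =
          θ • ((Pi.single u 1 : Fin m → ℝ) + Pi.single v 1)) ∧
       (∃ θ : ℝ, H *ᵥ ((Pi.single u 1 : Fin m → ℝ) - Pi.single v 1) =
          θ • ((Pi.single u 1 : Fin m → ℝ) - Pi.single v 1))) := by
  rintro ⟨hadd, hsub⟩
  obtain ⟨w, hwu, hwv⟩ := Fintype.exists_ne_ne_of_two_lt_card (by rwa [Fintype.card_fin]) u v
  have hblock : ∀ i ∈ ({u, v}ᶜ : Set (Fin m)), ∀ j, j ∉ ({u, v}ᶜ : Set (Fin m)) →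
      H i j = 0 := by
    intro i hi j hj
    simp only [Set.mem_compl_iff, Set.mem_insert_iff, Set.mem_singleton_iff, not_or] at hi
    rw [Set.notMem_compl_iff] at hj
    have hzero := Matrix.apply_eq_zero_of_mulVec_single_add_sub_eigen hi.1 hi.2 hadd hsub
    rcases hj with rfl | rfl
    exacts [hzero.1, hzero.2]
  rcases hirr _ hblock with h | h
  · exact (Set.eq_empty_iff_forall_notMem.mp h) w (by simp [hwu, hwv])
  · exact (h ▸ Set.mem_univ u : u ∈ ({u, v}ᶜ : Set (Fin m))) (by simp)

theorem stmt11 {m r : ℕ} (hm : 3 ≤ m) (H : Matrix (Fin m) (Fin m) ℝ)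
    (lam : Fin r → ℝ) (E : Fin r → Matrix (Fin m) (Fin m) ℝ)
    (hH : H.IsSymm)
    (hlam : Function.Injective lam)
    (hEsymm : ∀ j, (E j).IsSymm)
    (hEidem : ∀ j, E j * E j = E j)
    (hEorth : ∀ j k, j ≠ k → E j * E k = 0)
    (hEsum : ∑ j, E j = 1)
    (hEnz : ∀ j, E j ≠ 0)
    (hspec : H = ∑ j, lam j • E j)
    (hirr : ∀ S : Set (Fin m), (∀ i ∈ S, ∀ j, j ∉ S → H i j = 0) → S = ∅ ∨ S = Set.univ)
    (u v : Fin m) (huv : u ≠ v)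
    (hsc : ∀ j, (E j) *ᵥ (Pi.single u 1 : Fin m → ℝ) = (E j) *ᵥ (Pi.single v 1 : Fin m → ℝ) ∨
      (E j) *ᵥ (Pi.single u 1 : Fin m → ℝ) = -((E j) *ᵥ (Pi.single v 1 : Fin m → ℝ))) :
    ¬ ((∃ θ : ℝ, H *ᵥ ((Pi.single u 1 : Fin m → ℝ) + Pi.single v 1) =
          θ • ((Pi.single u 1 : Fin m → ℝ) + Pi.single v 1)) ∧
       (∃ θ : ℝ, H *ᵥ ((Pi.single u 1 : Fin m → ℝ) - Pi.single v 1) =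
          θ • ((Pi.single u 1 : Fin m → ℝ) - Pi.single v 1))) :=
  stmt11_general hm H hirr u v
end

section
/- Let H be an m×m Hermitian matrix such that all pairs of columns are strongly cospectral. Then every eigenvalue of H is simple, and for every spectral projection Eⱼ and all indices u,v: |(Eⱼ)ᵤᵥ| = 1/m and (Eⱼ)ᵤᵤ = 1/m. -/
/-!
Fix one spectral idempotent `P`. As `P` is a Hermitian idempotent, `P u v = ⟨P eᵤ, P eᵥ⟩`, and
strong cospectrality makes every column a unimodular multiple `c u • P e_w` of a fixed column.
Hence `P u v = conj (c u) * c v * P w w`, so `P` has rank one and all entries of `P` have the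
modulus of `P w w`. Idempotence gives `P w w = ∑ₖ P w k * P k w = m * (P w w)²`, and `P ≠ 0`
forces `P w w = 1 / m`.
-/

open Matrix

namespace Matrix

theorem rank_eq_one_of_forall_col_eq_smul {m n K : Type*} [Fintype n] [Field K]
    {A : Matrix m n K} (hA : A ≠ 0) (hcol : ∀ u v, ∃ c : K, A.col u = c • A.col v) :
    A.rank = 1 := by
  obtain ⟨w, hw⟩ : ∃ w, A.col w ≠ 0 := by
    by_contra! h
    exact hA (ext fun i w => congrFun (h w) i)
  have hspan : Submodule.span K (Set.range A.col) = K ∙ A.col w := by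
    refine le_antisymm (Submodule.span_le.mpr ?_) (Submodule.span_mono (by simp))
    rintro _ ⟨u, rfl⟩
    obtain ⟨c, hc⟩ := hcol u w
    exact hc ▸ Submodule.smul_mem _ c (Submodule.mem_span_singleton_self _)
  rw [rank_eq_finrank_span_cols, hspan, finrank_span_singleton hw]

namespace IsHermitian

variable {n : Type*} [Fintype n] {P : Matrix n n ℂ}

theorem apply_eq_sum_star_mul_of_mul_self (hP : P.IsHermitian) (hidem : P * P = P) (u v : n) :
    P u v = ∑ k, star (P k u) * P k v := by
  conv_lhs => rw [← hidem]
  nth_rw 1 [← hP.eq]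
  simp [mul_apply]

theorem apply_eq_of_col_eq_smul (hP : P.IsHermitian) (hidem : P * P = P) {w : n} {c : n → ℂ}
    (hc : ∀ u, P.col u = c u • P.col w) (u v : n) :
    P u v = star (c u) * c v * P w w := by
  rw [hP.apply_eq_sum_star_mul_of_mul_self hidem, hP.apply_eq_sum_star_mul_of_mul_self hidem,
    Finset.mul_sum]
  refine Finset.sum_congr rfl fun k _ => ?_
  have hu := congrFun (hc u) k
  have hv := congrFun (hc v) k
  simp only [col_apply, Pi.smul_apply, smul_eq_mul] at hu hv
  rw [hu, hv, star_mul']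
  ring

theorem apply_self_eq_inv_card (hP : P.IsHermitian) (hidem : P * P = P) (hP0 : P ≠ 0) {w : n}
    {c : n → ℂ} (hc1 : ∀ u, ‖c u‖ = 1) (hc : ∀ u, P.col u = c u • P.col w) :
    P w w = (Fintype.card n : ℂ)⁻¹ := by
  have entry := hP.apply_eq_of_col_eq_smul hidem hc
  have unit (u : n) : star (c u) * c u = 1 := by
    rw [RCLike.star_def, Complex.conj_mul', hc1]
    norm_num
  have hd0 : P w w ≠ 0 := fun h => hP0 (Matrix.ext fun u v => by simp [entry u v, h])
  have hd : P w w = Fintype.card n * (P w w * P w w) := calc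
    P w w = ∑ k, P w k * P k w := by rw [← mul_apply, hidem]
    _ = ∑ k : n, P w w * P w w := Finset.sum_congr rfl fun k _ => by
      rw [entry w k, entry k w]
      linear_combination (star (c k) * c k * P w w * P w w) * unit w + P w w * P w w * unit k
    _ = Fintype.card n * (P w w * P w w) := by simp
  refine eq_inv_of_mul_eq_one_left (mul_left_cancel₀ hd0 ?_)
  linear_combination -hd

theorem norm_apply_eq_inv_card (hP : P.IsHermitian) (hidem : P * P = P) (hP0 : P ≠ 0)
    (hcol : ∀ u v, ∃ c : ℂ, ‖c‖ = 1 ∧ P.col u = c • P.col v) (u v : n) :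
    ‖P u v‖ = (Fintype.card n : ℝ)⁻¹ := by
  choose c hc1 hc using fun x => hcol x u
  rw [hP.apply_eq_of_col_eq_smul hidem hc, hP.apply_self_eq_inv_card hidem hP0 hc1 hc]
  simp [hc1]

end IsHermitian

end Matrix

theorem stmt13_general {m r : ℕ} (E : Fin r → Matrix (Fin m) (Fin m) ℂ)
    (hEherm : ∀ j, (E j).IsHermitian)
    (hEidem : ∀ j, E j * E j = E j)
    (hEnz : ∀ j, E j ≠ 0)
    (hsc : ∀ u v : Fin m, ∀ j, ∃ c : ℂ, ‖c‖ = 1 ∧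
      (E j) *ᵥ (Pi.single u 1 : Fin m → ℂ) = c • ((E j) *ᵥ (Pi.single v 1 : Fin m → ℂ))) :
    (∀ j, (E j).rank = 1) ∧
    (∀ j, ∀ u v : Fin m, ‖(E j) u v‖ = (m : ℝ)⁻¹ ∧ (E j) u u = ((m : ℂ))⁻¹) := by
  have hcol (j) (u v : Fin m) : ∃ c : ℂ, ‖c‖ = 1 ∧ (E j).col u = c • (E j).col v := by
    simpa only [mulVec_single_one] using hsc u v j
  refine ⟨fun j => rank_eq_one_of_forall_col_eq_smul (hEnz j) fun u v => ?_,
    fun j u v => ⟨?_, ?_⟩⟩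
  · obtain ⟨c, -, hc⟩ := hcol j u v
    exact ⟨c, hc⟩
  · simpa using (hEherm j).norm_apply_eq_inv_card (hEidem j) (hEnz j) (hcol j) u v
  · choose c hc1 hc using fun x => hcol j x u
    simpa using (hEherm j).apply_self_eq_inv_card (hEidem j) (hEnz j) hc1 hc

theorem stmt13 {m r : ℕ} (hm : 0 < m) (H : Matrix (Fin m) (Fin m) ℂ)
    (lam : Fin r → ℝ) (E : Fin r → Matrix (Fin m) (Fin m) ℂ)
    (hH : H.IsHermitian)
    (hlam : Function.Injective lam)
    (hEherm : ∀ j, (E j).IsHermitian)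
    (hEidem : ∀ j, E j * E j = E j)
    (hEorth : ∀ j k, j ≠ k → E j * E k = 0)
    (hEsum : ∑ j, E j = 1)
    (hEnz : ∀ j, E j ≠ 0)
    (hspec : H = ∑ j, (lam j : ℂ) • E j)
    (hsc : ∀ u v : Fin m, ∀ j, ∃ c : ℂ, ‖c‖ = 1 ∧
      (E j) *ᵥ (Pi.single u 1 : Fin m → ℂ) = c • ((E j) *ᵥ (Pi.single v 1 : Fin m → ℂ))) :
    (∀ j, (E j).rank = 1) ∧
    (∀ j, ∀ u v : Fin m, ‖(E j) u v‖ = (m : ℝ)⁻¹ ∧ (E j) u u = ((m : ℂ))⁻¹) :=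
  stmt13_general E hEherm hEidem hEnz hsc
end

section
/- Let H be an m×m real symmetric matrix (m ≥ 2) such that all pairs of columns of H are strongly cospectral. Then m is even. -/
open Matrix

private lemma mv_single {m : ℕ} (A : Matrix (Fin m) (Fin m) ℝ) (u i : Fin m) :
    (A *ᵥ (Pi.single u 1 : Fin m → ℝ)) i = A i u := by
  simp [Matrix.mulVec, dotProduct, Pi.single_apply, mul_ite]

private lemma sum_signs_even {m : ℕ} (s : Fin m → ℝ)
    (hs : ∀ w, s w = 1 ∨ s w = -1) (hsum : ∑ w, s w = 0) : Even m := by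
  classical
  set P := Finset.univ.filter (fun w : Fin m => s w = 1) with hP
  set Q := Finset.univ.filter (fun w : Fin m => ¬ s w = 1) with hQ
  have hcard : P.card + Q.card = m := by
    simpa using Finset.card_filter_add_card_filter_not
      (s := (Finset.univ : Finset (Fin m))) (p := fun w => s w = 1)
  have h1 : ∑ w ∈ P, s w = (P.card : ℝ) := by
    rw [Finset.sum_congr rfl (fun w hw => (Finset.mem_filter.mp hw).2)]
    simp
    rfl
  have h2 : ∑ w ∈ Q, s w = -(Q.card : ℝ) := by
    have hq : ∀ w ∈ Q, s w = -1 := by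
      intro w hw
      have := (Finset.mem_filter.mp hw).2
      rcases hs w with h | h
      · exact absurd h this
      · exact h
    rw [Finset.sum_congr rfl hq, Finset.sum_const]
    simp
  have hsplit : ∑ w ∈ P, s w + ∑ w ∈ Q, s w = 0 := by
    rw [hP, hQ, Finset.sum_filter_add_sum_filter_not]
    exact hsum
  rw [h1, h2] at hsplit
  have : (P.card : ℝ) = (Q.card : ℝ) := by linarith
  have hpq : P.card = Q.card := Nat.cast_injective this
  exact ⟨P.card, by omega⟩

theorem stmt14 {m r : ℕ} (hm : 2 ≤ m) (H : Matrix (Fin m) (Fin m) ℝ)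
    (lam : Fin r → ℝ) (E : Fin r → Matrix (Fin m) (Fin m) ℝ)
    (hH : H.IsSymm)
    (hlam : Function.Injective lam)
    (hEsymm : ∀ j, (E j).IsSymm)
    (hEidem : ∀ j, E j * E j = E j)
    (hEorth : ∀ j k, j ≠ k → E j * E k = 0)
    (hEsum : ∑ j, E j = 1)
    (hEnz : ∀ j, E j ≠ 0)
    (hspec : H = ∑ j, lam j • E j)
    (hsc : ∀ u v : Fin m, ∀ j,
      (E j) *ᵥ (Pi.single u 1 : Fin m → ℝ) = (E j) *ᵥ (Pi.single v 1 : Fin m → ℝ) ∨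
      (E j) *ᵥ (Pi.single u 1 : Fin m → ℝ) = -((E j) *ᵥ (Pi.single v 1 : Fin m → ℝ))) :
    Even m := by
  classical
  have hm0 : 0 < m := by omega
  set z : Fin m := ⟨0, by omega⟩ with hz
  set o : Fin m := ⟨1, by omega⟩ with ho
  -- translate hsc into entrywise statements
  have hcol : ∀ (j : Fin r) (u : Fin m),
      (∀ i, E j i u = E j i z) ∨ (∀ i, E j i u = -(E j i z)) := by
    intro j u
    rcases hsc u z j with h | h
    · left; intro i
      have := congrFun h i
      simpa [mv_single] using this
    · right; intro i
      have := congrFun h i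
      simpa [mv_single] using this
  -- sign functions
  have hsig : ∀ j : Fin r, ∃ σ : Fin m → ℝ,
      (∀ u, σ u = 1 ∨ σ u = -1) ∧ (∀ u i, E j i u = σ u * E j i z) := by
    intro j
    refine ⟨fun u => if ∀ i, E j i u = E j i z then 1 else -1, ?_, ?_⟩
    · intro u; by_cases h : ∀ i, E j i u = E j i z <;> simp [h]
    · intro u i
      by_cases h : ∀ i, E j i u = E j i z
      · simp [h, h i]
      · rcases hcol j u with h' | h'
        · exact absurd h' h
        · simp [h, h' i]
  choose σ hσpm hσcol using hsig
  -- entry formula: E j u v = σ j u * σ j v * d j  where d j = E j z z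
  have hentry : ∀ (j : Fin r) (u v : Fin m),
      E j u v = σ j u * σ j v * E j z z := by
    intro j u v
    have h1 : E j u v = σ j v * E j u z := hσcol j v u
    have hsym : E j u z = E j z u := by
      have := congrFun (congrFun (hEsymm j) u) z
      simpa [Matrix.transpose_apply] using this.symm
    rw [h1, hsym, hσcol j u z]
    ring
  -- d j ≠ 0
  have hd : ∀ j, E j z z ≠ 0 := by
    intro j hd0
    apply hEnz j
    ext u v
    rw [hentry j u v, hd0]
    simp
  have hσsq : ∀ (j : Fin r) (u : Fin m), σ j u * σ j u = 1 := by
    intro j u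
    rcases hσpm j u with h | h <;> rw [h] <;> norm_num
  -- r ≥ 2
  have hr : 2 ≤ r := by
    by_contra hlt
    push_neg at hlt
    interval_cases r
    · have := congrFun (congrFun hEsum z) z
      simp [Matrix.one_apply] at this
    · have hE1 : E 0 = 1 := by
        have := hEsum
        simpa using this
      have hzo : z ≠ o := by
        intro h
        have := congrArg Fin.val h
        simp [hz, ho] at this
      have h10 : (1 : Matrix (Fin m) (Fin m) ℝ) z o = 0 := by
        simp [Matrix.one_apply, hzo]
      rw [← hE1, hentry 0 z o] at h10
      rcases hσpm 0 z with h | h <;> rcases hσpm 0 o with h' | h' <;>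
        rw [h, h'] at h10 <;> simp at h10 <;> exact hd 0 h10
  set j : Fin r := ⟨0, by omega⟩
  set k : Fin r := ⟨1, by omega⟩
  have hjk : j ≠ k := by
    intro h
    have := congrArg Fin.val h
    simp [j, k] at this
  -- orthogonality at entry (z,z)
  have horth := congrFun (congrFun (hEorth j k hjk) z) z
  rw [Matrix.mul_apply] at horth
  have hsum0 : ∑ w, σ j w * σ k w = 0 := by
    have hterm : ∀ w, E j z w * E k w z
        = (σ j z * σ k z * (E j z z * E k z z)) * (σ j w * σ k w) := by
      intro w
      rw [hentry j z w, hentry k w z]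
      ring
    rw [Finset.sum_congr rfl (fun w _ => hterm w), ← Finset.mul_sum] at horth
    simp only [Matrix.zero_apply] at horth
    rcases mul_eq_zero.mp horth with h | h
    · exfalso
      have : σ j z * σ k z * (E j z z * E k z z) ≠ 0 := by
        apply mul_ne_zero
        apply mul_ne_zero
        · rcases hσpm j z with h' | h' <;> rw [h'] <;> norm_num
        · rcases hσpm k z with h' | h' <;> rw [h'] <;> norm_num
        · exact mul_ne_zero (hd j) (hd k)
      exact this h
    · exact h
  exact sum_signs_even (fun w => σ j w * σ k w)
    (fun w => by
      rcases hσpm j w with h | h <;> rcases hσpm k w with h' | h' <;>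
        norm_num [h, h'])
    hsum0
end

section
/- Let T be a set of pairwise twin vertices in a connected weighted graph X with |T| ≥ 3, and let M = αI + βD + γA (γ ≠ 0). Then no vertex u ∈ T is strongly cospectral (with respect to M) with any other vertex v of X. In particular, the spectral projection E_θ onto the twin eigenvalue θ satisfies: E_θ eᵤ is not a scalar multiple of E_θ eᵥ by any unit scalar, for u ∈ T and v ≠ u. -/
open Matrix

theorem stmt17 {n r : ℕ} (A : Matrix (Fin n) (Fin n) ℝ) (hA : A.IsSymm)
    (hconn : ∀ S : Set (Fin n), (∀ i ∈ S, ∀ j, j ∉ S → A i j = 0) → S = ∅ ∨ S = Set.univ)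
    (α β γ ω η : ℝ) (hγ : γ ≠ 0)
    (T : Finset (Fin n)) (hT : 3 ≤ T.card)
    (htwin : ∀ u ∈ T, ∀ v ∈ T, u ≠ v → ∀ j, j ≠ u → j ≠ v → A j u = A j v)
    (hloop : ∀ u ∈ T, A u u = ω)
    (hedge : ∀ u ∈ T, ∀ v ∈ T, u ≠ v → A u v = η)
    (lam : Fin r → ℝ) (E : Fin r → Matrix (Fin n) (Fin n) ℝ)
    (hlam : Function.Injective lam)
    (hEsymm : ∀ j, (E j).IsSymm)
    (hEidem : ∀ j, E j * E j = E j)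
    (hEorth : ∀ j k, j ≠ k → E j * E k = 0)
    (hEsum : ∑ j, E j = 1)
    (hEnz : ∀ j, E j ≠ 0)
    (hspec : α • (1 : Matrix (Fin n) (Fin n) ℝ) +
        β • Matrix.diagonal (fun w => A w w + ∑ j, A w j) + γ • A = ∑ j, lam j • E j) :
    ∀ u ∈ T, ∀ v : Fin n, v ≠ u →
      (¬ ∀ j, (E j) *ᵥ (Pi.single u 1 : Fin n → ℝ) = (E j) *ᵥ (Pi.single v 1 : Fin n → ℝ) ∨
          (E j) *ᵥ (Pi.single u 1 : Fin n → ℝ) = -((E j) *ᵥ (Pi.single v 1 : Fin n → ℝ))) ∧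
      (∀ j, lam j = α + β * (A u u + ∑ k, A u k) + γ * (ω - η) →
        ∀ c : ℝ, |c| = 1 →
          (E j) *ᵥ (Pi.single u 1 : Fin n → ℝ) ≠ c • ((E j) *ᵥ (Pi.single v 1 : Fin n → ℝ))) := by
  intro u hu v hv
  set θ : ℝ := α + β * (A u u + ∑ k, A u k) + γ * (ω - η) with hθ
  -- pick w ∈ T with w ≠ u, w ≠ v
  obtain ⟨w, hw, hwu, hwv⟩ : ∃ w ∈ T, w ≠ u ∧ w ≠ v := by
    have hcard : 0 < (T \ {u, v}).card := by
      have h1 : (T \ {u, v}).card ≥ T.card - ({u, v} : Finset (Fin n)).card :=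
        Finset.le_card_sdiff _ _
      have h2 : ({u, v} : Finset (Fin n)).card ≤ 2 := Finset.card_insert_le _ _ |>.trans (by simp)
      omega
    obtain ⟨w, hw⟩ := Finset.card_pos.mp hcard
    rw [Finset.mem_sdiff, Finset.mem_insert, Finset.mem_singleton] at hw
    exact ⟨w, hw.1, fun h => hw.2 (Or.inl h), fun h => hw.2 (Or.inr h)⟩
  have huw : u ≠ w := hwu.symm
  -- degrees equal
  have hdeg : ∑ k, A w k = ∑ k, A u k := by
    rw [← Equiv.sum_comp (Equiv.swap u w) (fun k => A u k)]
    apply Finset.sum_congr rfl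
    intro k _
    rcases eq_or_ne k u with rfl | hku
    · rw [Equiv.swap_apply_left, hedge w hw k hu hwu, hedge k hu w hw huw]
    rcases eq_or_ne k w with rfl | hkw
    · rw [Equiv.swap_apply_right, hloop k hw, hloop u hu]
    · rw [Equiv.swap_apply_of_ne_of_ne hku hkw, ← hA.apply w k, htwin w hw u hu hwu k hkw hku]
      exact hA.apply u k
  set x : Fin n → ℝ := Pi.single u 1 - Pi.single w 1 with hxdef
  have hxu : x u = 1 := by simp [hxdef, Pi.single_eq_of_ne huw]
  have hxw : x w = -1 := by simp [hxdef, Pi.single_eq_of_ne hwu]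
  have hxo : ∀ i, i ≠ u → i ≠ w → x i = 0 := by
    intro i hiu hiw
    simp [hxdef, Pi.single_eq_of_ne hiu, Pi.single_eq_of_ne hiw]
  -- eigen equation
  have hMx : (∑ j, lam j • E j) *ᵥ x = θ • x := by
    rw [← hspec]
    funext i
    have hAx : (A *ᵥ x) i = A i u - A i w := by
      simp [hxdef, Matrix.mulVec_sub]
    simp only [Matrix.add_mulVec, Matrix.smul_mulVec, Matrix.one_mulVec,
      Pi.add_apply, Pi.smul_apply, smul_eq_mul]
    rw [Matrix.mulVec_diagonal, hAx]
    rcases eq_or_ne i u with hiu | hiu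
    · rw [hiu, hxu, hedge u hu w hw huw, hθ, hloop u hu]
      ring
    rcases eq_or_ne i w with hiw | hiw
    · rw [hiw, hxw, hdeg, hloop w hw, hedge w hw u hu hwu, hθ, hloop u hu]
      ring
    · rw [hxo i hiu hiw, htwin u hu w hw huw i hiu hiw]
      ring
  -- action of each E k on x
  have hEact : ∀ k, lam k • (E k *ᵥ x) = θ • (E k *ᵥ x) := by
    intro k
    have h := congrArg (fun y => E k *ᵥ y) hMx
    rw [Matrix.mulVec_mulVec, Matrix.mul_sum, Matrix.mulVec_smul] at h
    have hcol : ∑ j, E k * lam j • E j = lam k • (E k * E k) := by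
      rw [Finset.sum_eq_single k]
      · rw [Matrix.mul_smul]
      · intro j _ hjk
        rw [Matrix.mul_smul, hEorth k j (Ne.symm hjk), smul_zero]
      · simp
    rw [hcol, hEidem, Matrix.smul_mulVec] at h
    exact h
  have hEk0 : ∀ k, lam k ≠ θ → E k *ᵥ x = 0 := by
    intro k hk
    have h : (lam k - θ) • (E k *ᵥ x) = 0 := by
      rw [sub_smul, hEact k, sub_self]
    rcases smul_eq_zero.mp h with h | h
    · exact absurd (sub_eq_zero.mp h) hk
    · exact h
  have hsumx : ∑ k, E k *ᵥ x = x := by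
    have hdist : (∑ k, E k) *ᵥ x = ∑ k, E k *ᵥ x := by
      funext i
      rw [Finset.sum_apply]
      simp only [Matrix.mulVec, dotProduct, Matrix.sum_apply, Finset.sum_mul]
      exact Finset.sum_comm
    rw [← hdist, hEsum, Matrix.one_mulVec]
  have hEfix : ∀ j, lam j = θ → E j *ᵥ x = x := by
    intro j hj
    have hsingle : ∑ k, E k *ᵥ x = E j *ᵥ x :=
      Finset.sum_eq_single_of_mem j (Finset.mem_univ j)
        (fun k _ hkj => hEk0 k (fun h => hkj (hlam (h.trans hj.symm))))
    exact hsingle.symm.trans hsumx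
  -- main part 2
  have main : ∀ j, lam j = θ → ∀ c : ℝ, |c| = 1 →
      E j *ᵥ (Pi.single u 1 : Fin n → ℝ) ≠ c • (E j *ᵥ (Pi.single v 1 : Fin n → ℝ)) := by
    intro j hj c hc heq
    have hdot : ∀ y : Fin n → ℝ, x ⬝ᵥ (E j *ᵥ y) = x ⬝ᵥ y := by
      intro y
      rw [Matrix.dotProduct_mulVec]
      congr 1
      rw [← (hEsymm j).eq, Matrix.vecMul_transpose, hEfix j hj]
    have h1 : x ⬝ᵥ (E j *ᵥ (Pi.single u 1 : Fin n → ℝ)) = 1 := by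
      rw [hdot, dotProduct_single, hxu, mul_one]
    have h2 : x ⬝ᵥ (E j *ᵥ (Pi.single v 1 : Fin n → ℝ)) = 0 := by
      rw [hdot, dotProduct_single, hxo v hv (Ne.symm hwv), zero_mul]
    rw [heq, dotProduct_smul, smul_eq_mul, h2, mul_zero] at h1
    exact zero_ne_one h1
  refine ⟨?_, main⟩
  intro hall
  have hex : ∃ j, lam j = θ := by
    by_contra h
    push_neg at h
    have hx0 : x = 0 := by
      rw [← hsumx]
      exact Finset.sum_eq_zero fun k _ => hEk0 k (h k)
    have := congrFun hx0 u
    rw [hxu] at this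
    exact one_ne_zero this
  obtain ⟨j, hj⟩ := hex
  rcases hall j with h1 | h1
  · exact main j hj 1 (by norm_num) (by simpa using h1)
  · exact main j hj (-1) (by norm_num) (by simpa [neg_smul, one_smul] using h1)
end

section
/- Let T = {u,v} be a pair of twin vertices in a connected weighted graph X, M = αI + βD + γA (γ ≠ 0), and θ = α + β·deg(u) + γ(ω − η) the twin eigenvalue with eigenvector eᵤ − eᵥ. If θ is a simple eigenvalue of M, then u and v are strongly cospectral with respect to M and the projection onto the θ-eigenspace equals E_θ = ½(eᵤ − eᵥ)(eᵤ − eᵥ)ᵀ. -/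
open Matrix

theorem stmt18 {n r : ℕ} (A : Matrix (Fin n) (Fin n) ℝ) (hA : A.IsSymm)
    (hconn : ∀ S : Set (Fin n), (∀ i ∈ S, ∀ j, j ∉ S → A i j = 0) → S = ∅ ∨ S = Set.univ)
    (α β γ ω η : ℝ) (hγ : γ ≠ 0)
    (u v : Fin n) (huv : u ≠ v)
    (htwin : ∀ j, j ≠ u → j ≠ v → A j u = A j v)
    (hloopu : A u u = ω) (hloopv : A v v = ω) (hedge : A u v = η)
    (lam : Fin r → ℝ) (E : Fin r → Matrix (Fin n) (Fin n) ℝ)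
    (hlam : Function.Injective lam)
    (hEsymm : ∀ j, (E j).IsSymm)
    (hEidem : ∀ j, E j * E j = E j)
    (hEorth : ∀ j k, j ≠ k → E j * E k = 0)
    (hEsum : ∑ j, E j = 1)
    (hEnz : ∀ j, E j ≠ 0)
    (hspec : α • (1 : Matrix (Fin n) (Fin n) ℝ) +
        β • Matrix.diagonal (fun w => A w w + ∑ j, A w j) + γ • A = ∑ j, lam j • E j)
    (j₀ : Fin r)
    (hθ : lam j₀ = α + β * (A u u + ∑ k, A u k) + γ * (ω - η))
    (hsimple : (E j₀).rank = 1) :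
    (∀ j, (E j) *ᵥ (Pi.single u 1 : Fin n → ℝ) = (E j) *ᵥ (Pi.single v 1 : Fin n → ℝ) ∨
      (E j) *ᵥ (Pi.single u 1 : Fin n → ℝ) = -((E j) *ᵥ (Pi.single v 1 : Fin n → ℝ))) ∧
    E j₀ = (1 / 2 : ℝ) • Matrix.vecMulVec ((Pi.single u 1 : Fin n → ℝ) - Pi.single v 1)
      ((Pi.single u 1 : Fin n → ℝ) - Pi.single v 1) := by
  classical
  have hsym : ∀ i j, A j i = A i j := fun i j => congrFun (congrFun hA i) j
  have hAvu : A v u = η := by rw [← hsym v u]; exact hedge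
  set w : Fin n → ℝ := (Pi.single u 1 : Fin n → ℝ) - Pi.single v 1 with hwdef
  set M : Matrix (Fin n) (Fin n) ℝ :=
    α • 1 + β • Matrix.diagonal (fun w => A w w + ∑ j, A w j) + γ • A with hMdef
  have hwu : w u = 1 := by simp [hwdef, Pi.single_apply, huv, Ne.symm huv]
  have hwv : w v = -1 := by simp [hwdef, Pi.single_apply, huv, Ne.symm huv]
  have hwo : ∀ i, i ≠ u → i ≠ v → w i = 0 := by
    intro i hiu hiv; simp [hwdef, Pi.single_apply, hiu, hiv]
  -- degrees of u and v coincide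
  have hdeg : A v v + ∑ j, A v j = A u u + ∑ j, A u j := by
    have hswap : ∀ j, A v j = A u (Equiv.swap u v j) := by
      intro j
      rcases eq_or_ne j u with rfl | hju
      · rw [Equiv.swap_apply_left, hAvu, hedge]
      rcases eq_or_ne j v with rfl | hjv
      · rw [Equiv.swap_apply_right, hloopv, hloopu]
      · rw [Equiv.swap_apply_of_ne_of_ne hju hjv, ← hsym v j, ← htwin j hju hjv]
        exact hsym u j
    rw [hloopu, hloopv]
    congr 1
    rw [Finset.sum_congr rfl fun j _ => hswap j]
    exact Equiv.sum_comp (Equiv.swap u v) fun j => A u j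
  -- w is a θ-eigenvector of M
  have hMe : ∀ i k, M i k = (if i = k then α + β * (A i i + ∑ j, A i j) else 0) + γ * A i k := by
    intro i k
    by_cases h : i = k
    · subst h
      simp [hMdef, Matrix.one_apply_eq]
    · simp [hMdef, Matrix.one_apply_ne h, Matrix.diagonal_apply_ne _ h, h]
  have hMw : M *ᵥ w = lam j₀ • w := by
    funext i
    have hMwi : (M *ᵥ w) i = M i u - M i v := by
      rw [hwdef, Matrix.mulVec_sub, Matrix.mulVec_single, Matrix.mulVec_single]
      simp
    rw [hMwi, Pi.smul_apply, smul_eq_mul]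
    rcases eq_or_ne i u with hiu | hiu
    · rw [hiu, hwu, hMe u u, hMe u v, if_pos rfl, if_neg huv, hθ, hloopu, hedge]
      ring
    rcases eq_or_ne i v with hiv | hiv
    · rw [hiv, hwv, hMe v u, hMe v v, if_neg (Ne.symm huv), if_pos rfl, hAvu, hdeg,
        hloopv, hθ, hloopu]
      ring
    · rw [hwo i hiu hiv, hMe i u, hMe i v, if_neg hiu, if_neg hiv, htwin i hiu hiv]
      ring
  -- E j * M = lam j • E j
  have hEM : ∀ j, E j * M = lam j • E j := by
    intro j
    rw [hspec, Finset.mul_sum]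
    rw [Finset.sum_eq_single j]
    · rw [Matrix.mul_smul, hEidem]
    · intro k _ hk
      rw [Matrix.mul_smul, hEorth j k (Ne.symm hk), smul_zero]
    · intro h; exact absurd (Finset.mem_univ j) h
  -- E j annihilates w for j ≠ j₀
  have hEw : ∀ j, j ≠ j₀ → E j *ᵥ w = 0 := by
    intro j hj
    have h1 : (E j * M) *ᵥ w = lam j • (E j *ᵥ w) := by
      rw [hEM j, Matrix.smul_mulVec]
    have h2 : (E j * M) *ᵥ w = lam j₀ • (E j *ᵥ w) := by
      rw [← Matrix.mulVec_mulVec, hMw, Matrix.mulVec_smul]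
    have h3 : (lam j - lam j₀) • (E j *ᵥ w) = 0 := by
      rw [sub_smul, h1.symm.trans h2, sub_self]
    rcases smul_eq_zero.mp h3 with h | h
    · exact absurd (hlam (sub_eq_zero.mp h)) hj
    · exact h
  -- E j₀ fixes w
  have hsumv : (∑ j, E j) *ᵥ w = ∑ j, E j *ᵥ w := by
    funext i
    simp only [Matrix.mulVec, dotProduct, Matrix.sum_apply, Finset.sum_apply,
      Finset.sum_mul]
    exact Finset.sum_comm
  have hEj0w : E j₀ *ᵥ w = w := by
    have : ∑ j, E j *ᵥ w = w := by rw [← hsumv, hEsum, Matrix.one_mulVec]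
    rwa [Finset.sum_eq_single j₀ (fun k _ hk => hEw k hk)
      (fun h => absurd (Finset.mem_univ j₀) h)] at this
  have hwne : w ≠ 0 := by
    intro h
    have := congrFun h u
    rw [hwu] at this
    exact one_ne_zero this
  -- rank-one structure of E j₀
  have hwmem : w ∈ LinearMap.range (E j₀).mulVecLin := ⟨w, hEj0w⟩
  have hall : ∀ x : Fin n → ℝ, ∃ c : ℝ, E j₀ *ᵥ x = c • w := by
    intro x
    have hne : (⟨w, hwmem⟩ : LinearMap.range (E j₀).mulVecLin) ≠ 0 := by
      intro h
      exact hwne (congrArg Subtype.val h)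
    obtain ⟨c, hc⟩ := (finrank_eq_one_iff_of_nonzero'
      (⟨w, hwmem⟩ : LinearMap.range (E j₀).mulVecLin) hne).mp hsimple
      ⟨E j₀ *ᵥ x, ⟨x, rfl⟩⟩
    refine ⟨c, ?_⟩
    have := congrArg Subtype.val hc
    simpa using this.symm
  choose c hc using fun l => hall (Pi.single l 1)
  have hEc : ∀ i l, E j₀ i l = c l * w i := by
    intro i l
    have := congrFun (hc l) i
    simpa [Matrix.mulVec_single] using this
  have hEsymm0 : ∀ i l, E j₀ i l = E j₀ l i := fun i l => (congrFun (congrFun (hEsymm j₀) i) l).symm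
  have hcw : ∀ l, c l = c u * w l := by
    intro l
    have h1 : E j₀ u l = c l := by rw [hEc u l, hwu, mul_one]
    have h2 : E j₀ l u = c u * w l := hEc l u
    rw [← h1, hEsymm0 u l, h2]
  have hsum2 : ∑ l, w l * w l = 2 := by
    have hterm : ∀ l, w l * w l = (if l = u then (1:ℝ) else 0) + (if l = v then 1 else 0) := by
      intro l
      rcases eq_or_ne l u with hlu | hlu
      · rw [hlu, hwu, if_pos rfl, if_neg huv]; norm_num
      rcases eq_or_ne l v with hlv | hlv
      · rw [hlv, hwv, if_neg (Ne.symm huv), if_pos rfl]; norm_num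
      · rw [hwo l hlu hlv, if_neg hlu, if_neg hlv]; norm_num
    rw [Finset.sum_congr rfl fun l _ => hterm l, Finset.sum_add_distrib]
    simp
    norm_num
  have hcu : c u = 1 / 2 := by
    have h1 : (E j₀ *ᵥ w) u = 1 := by rw [hEj0w, hwu]
    have h2 : (E j₀ *ᵥ w) u = c u * 2 := by
      simp only [Matrix.mulVec, dotProduct]
      calc ∑ l, E j₀ u l * w l = ∑ l, c u * (w l * w l) := by
            refine Finset.sum_congr rfl fun l _ => ?_
            rw [hEc u l, hwu, mul_one, hcw l]; ring
        _ = c u * 2 := by rw [← Finset.mul_sum, hsum2]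
    rw [h2] at h1; linarith
  have hfinal : E j₀ = (1 / 2 : ℝ) • Matrix.vecMulVec w w := by
    funext i l
    rw [Matrix.smul_apply, Matrix.vecMulVec_apply, smul_eq_mul, hEc i l, hcw l, hcu]
    ring
  refine ⟨fun j => ?_, hfinal⟩
  rcases eq_or_ne j j₀ with rfl | hj
  · right
    funext i
    rw [hfinal]
    simp only [Matrix.mulVec_single_one, Matrix.col_apply, mul_one, Matrix.smul_apply, Matrix.vecMulVec_apply,
      Pi.neg_apply]
    rw [hwu, hwv, smul_eq_mul, smul_eq_mul]
    ring
  · left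
    have h := hEw j hj
    rw [hwdef, Matrix.mulVec_sub, sub_eq_zero] at h
    exact h
end
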